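/- arXiv:2402.19081 — 9 statements merged into one kernel-verified Lean document; each statement's English description precedes it below -/
import Mathlib

section
/- Each weakly monotone creation operator A†_i is a partial isometry: A_i A†_i is an orthogonal projection (onto the closed span of Ω and tensors whose top index equals i). -/
open scoped Classical

/-- `i` is the top (leftmost) index of the weakly monotone basis tensor labelled
by the multiplicity function `k : Fin n → ℕ` (the basis vector
`e_n^{k (n-1)} ⊗ ⋯ ⊗ e_1^{k 0}`, the vacuum `Ω` corresponding to `k = 0`). -/
def WMTop {n : ℕ} (i : Fin n) (k : Fin n → ℕ) : Prop :=
  0 < k i ∧ ∀ j, i < j → k j = 0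

/-- One may create `e i` on the left of the basis tensor labelled by `k`:
every index strictly above `i` has multiplicity zero. -/
def WMCanCreate {n : ℕ} (i : Fin n) (k : Fin n → ℕ) : Prop :=
  ∀ j, i < j → k j = 0

/-- Decrease by one the multiplicity of `e i`. -/
def wmDec {n : ℕ} (k : Fin n → ℕ) (i : Fin n) : Fin n → ℕ :=
  Function.update k i (k i - 1)

/-- Increase by one the multiplicity of `e i`. -/
def wmInc {n : ℕ} (k : Fin n → ℕ) (i : Fin n) : Fin n → ℕ :=
  Function.update k i (k i + 1)

lemma hilbertBasis_ext {ι : Type*} {F : Type*} [NormedAddCommGroup F]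
    [InnerProductSpace ℂ F] [CompleteSpace F] (b : HilbertBasis ι ℂ F)
    {f g : F →L[ℂ] F} (h : ∀ i, f (b i) = g (b i)) : f = g := by
  have hd : Dense ((Submodule.span ℂ (Set.range fun i => b i)) : Set F) :=
    Submodule.dense_iff_topologicalClosure_eq_top.mpr b.dense_span
  refine ContinuousLinearMap.ext_on hd ?_
  rintro x ⟨i, rfl⟩
  exact h i

theorem creation_partial_isometry
    {n : ℕ} {F : Type*} [NormedAddCommGroup F] [InnerProductSpace ℂ F]
    [CompleteSpace F] (E : HilbertBasis (Fin n → ℕ) ℂ F)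
    (A Ad : Fin n → F →L[ℂ] F)
    (hAdj : ∀ i, Ad i = ContinuousLinearMap.adjoint (A i))
    (hA : ∀ i k, A i (E k) = if WMTop i k then E (wmDec k i) else 0)
    (hAc : ∀ i k, Ad i (E k) = if WMCanCreate i k then E (wmInc k i) else 0)
    :
    ∀ i : Fin n, IsSelfAdjoint (A i * Ad i) ∧ IsIdempotentElem (A i * Ad i) := by
  intro i
  have key : ∀ k, (A i * Ad i) (E k) = if WMCanCreate i k then E k else 0 := by
    intro k
    show A i (Ad i (E k)) = _
    rw [hAc]
    by_cases h : WMCanCreate i k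
    · simp only [h, if_pos]
      rw [hA]
      have htop : WMTop i (wmInc k i) := by
        constructor
        · simp [wmInc]
        · intro j hj
          simp only [wmInc, Function.update_apply]
          rw [if_neg (by exact fun he => absurd he (by rintro rfl; exact lt_irrefl _ hj))]
          exact h j hj
      rw [if_pos htop]
      congr 1
      funext j
      by_cases hji : j = i
      · subst hji; simp [wmDec, wmInc]
      · simp [wmDec, wmInc, Function.update_apply, hji]
    · simp [h]
  constructor
  · show star _ = _
    rw [star_mul, ContinuousLinearMap.star_eq_adjoint, ContinuousLinearMap.star_eq_adjoint,
      hAdj, ContinuousLinearMap.adjoint_adjoint]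
  · unfold IsIdempotentElem
    apply hilbertBasis_ext E
    intro k
    show (A i * Ad i) ((A i * Ad i) (E k)) = _
    rw [key k]
    by_cases h : WMCanCreate i k
    · rw [if_pos h, key, if_pos h]
    · rw [if_neg h, map_zero]
end

section
/- The creation operator A†_n with the maximal test index n is an isometry on the weakly monotone Fock space, i.e., A_n A†_n = I. -/
open scoped Classical

theorem top_creation_isometry
    {n : ℕ} {F : Type*} [NormedAddCommGroup F] [InnerProductSpace ℂ F]
    [CompleteSpace F] (E : HilbertBasis (Fin n → ℕ) ℂ F)
    (A Ad : Fin n → F →L[ℂ] F)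
    (hAdj : ∀ i, Ad i = ContinuousLinearMap.adjoint (A i))
    (hA : ∀ i k, A i (E k) = if WMTop i k then E (wmDec k i) else 0)
    (hAc : ∀ i k, Ad i (E k) = if WMCanCreate i k then E (wmInc k i) else 0)
    (hn : 0 < n)
    :
    A ⟨n - 1, by omega⟩ * Ad ⟨n - 1, by omega⟩ = 1 := by
  set t : Fin n := ⟨n - 1, by omega⟩ with ht
  have htop : ∀ j : Fin n, ¬ t < j := by
    intro j hj
    have := j.isLt
    simp only [Fin.lt_def] at hj
    change n - 1 < (j : ℕ) at hj
    omega
  apply ContinuousLinearMap.ext_on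
    (Submodule.dense_iff_topologicalClosure_eq_top.mpr E.dense_span)
  rintro _ ⟨k, rfl⟩
  simp only [ContinuousLinearMap.mul_apply, ContinuousLinearMap.one_apply]
  rw [hAc, if_pos (show WMCanCreate t k from fun j hj => absurd hj (htop j)), hA,
    if_pos (show WMTop t (wmInc k t) from
      ⟨by simp [wmInc], fun j hj => absurd hj (htop j)⟩)]
  congr 1
  funext j
  by_cases h : j = t
  · subst h; simp [wmDec, wmInc]
  · simp [wmDec, wmInc, Function.update_of_ne h]
end

section
/- The operator A_0 := A_1 A†_1 − A†_1 A_1 equals the orthogonal projection P_Ω of the weakly monotone Fock space onto the span of the vacuum vector Ω; in particular A_0 is self-adjoint and idempotent. -/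
open scoped Classical

theorem vacuum_projection
    {n : ℕ} {F : Type*} [NormedAddCommGroup F] [InnerProductSpace ℂ F]
    [CompleteSpace F] (E : HilbertBasis (Fin n → ℕ) ℂ F)
    (A Ad : Fin n → F →L[ℂ] F)
    (hAdj : ∀ i, Ad i = ContinuousLinearMap.adjoint (A i))
    (hA : ∀ i k, A i (E k) = if WMTop i k then E (wmDec k i) else 0)
    (hAc : ∀ i k, Ad i (E k) = if WMCanCreate i k then E (wmInc k i) else 0)
    (hn : 0 < n)
    (A₀ : F →L[ℂ] F)
    (hA₀ : A₀ = A ⟨0, hn⟩ * Ad ⟨0, hn⟩ - Ad ⟨0, hn⟩ * A ⟨0, hn⟩)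
    :
    (∀ x : F, A₀ x = (inner ℂ (E (0 : Fin n → ℕ)) x : ℂ) • E (0 : Fin n → ℕ)) ∧
      IsSelfAdjoint A₀ ∧ IsIdempotentElem A₀ := by
  set i : Fin n := ⟨0, hn⟩ with hi
  set v : F := E (0 : Fin n → ℕ) with hv
  -- inner products of basis vectors
  have hinner : ∀ k l : Fin n → ℕ, (inner ℂ (E k) (E l) : ℂ) = if k = l then 1 else 0 := by
    intro k l
    exact orthonormal_iff_ite.mp E.orthonormal k l
  -- key lemmas about wmInc/wmDec
  have hdecinc : ∀ k : Fin n → ℕ, wmDec (wmInc k i) i = k := by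
    intro k
    funext j
    by_cases hj : j = i
    · subst hj; simp [wmDec, wmInc]
    · simp [wmDec, wmInc, Function.update_of_ne hj]
  have hincdec : ∀ k : Fin n → ℕ, 0 < k i → wmInc (wmDec k i) i = k := by
    intro k hk
    funext j
    by_cases hj : j = i
    · subst hj; simp [wmDec, wmInc]; omega
    · simp [wmDec, wmInc, Function.update_of_ne hj]
  -- action on basis vectors
  have hbasis : ∀ k : Fin n → ℕ, A₀ (E k) = if k = 0 then v else 0 := by
    intro k
    rw [hA₀]
    simp only [ContinuousLinearMap.sub_apply, ContinuousLinearMap.mul_apply]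
    rw [hAc, hA]
    by_cases hc : WMCanCreate i k
    · rw [if_pos hc]
      have hIncTop : WMTop i (wmInc k i) := by
        refine ⟨by simp [wmInc], fun j hj => ?_⟩
        rw [wmInc, Function.update_of_ne (ne_of_gt hj)]
        exact hc j hj
      by_cases hp : 0 < k i
      · rw [if_pos ⟨hp, hc⟩, hA, hAc, if_pos hIncTop]
        have hDecCan : WMCanCreate i (wmDec k i) := by
          intro j hj
          rw [wmDec, Function.update_of_ne (ne_of_gt hj)]
          exact hc j hj
        rw [if_pos hDecCan, hdecinc, hincdec k hp, sub_self]
        rw [if_neg]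
        intro h
        subst h
        simp at hp
      · have hk0 : k i = 0 := Nat.eq_zero_of_not_pos hp
        have hk : k = 0 := by
          funext j
          by_cases hj : j = i
          · subst hj; exact hk0
          · refine hc j ?_
            refine lt_of_le_of_ne (by simp [hi, Fin.le_def]) ?_
            exact fun h => hj h.symm
        rw [if_neg (fun h : WMTop i k => hp h.1), hA, if_pos hIncTop, hdecinc,
          map_zero, sub_zero, if_pos hk, hk, hv]
    · rw [if_neg hc, if_neg (fun h : WMTop i k => hc h.2), map_zero, map_zero,
        sub_zero]
      rw [if_neg]
      intro h
      subst h
      exact hc fun j _ => rfl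
  -- the projection as a continuous linear map
  set P : F →L[ℂ] F := (innerSL ℂ v).smulRight v with hP
  have hPapply : ∀ x : F, P x = (inner ℂ v x : ℂ) • v := fun x => rfl
  have hAP : A₀ = P := by
    have hdense : Dense ((Submodule.span ℂ (Set.range E)) : Set F) := by
      exact Submodule.dense_iff_topologicalClosure_eq_top.mpr E.dense_span
    refine ContinuousLinearMap.ext_on hdense ?_
    rintro x ⟨k, rfl⟩
    rw [hbasis k, hPapply, hinner]
    by_cases hk : (0 : Fin n → ℕ) = k
    · rw [if_pos hk, if_pos hk.symm, one_smul]
    · rw [if_neg hk, if_neg (fun h => hk h.symm), zero_smul]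
  have hmain : ∀ x : F, A₀ x = (inner ℂ v x : ℂ) • v := by
    intro x; rw [hAP]; rfl
  have hvv : (inner ℂ v v : ℂ) = 1 := by rw [hv, hinner, if_pos rfl]
  refine ⟨hmain, ?_, ?_⟩
  · rw [ContinuousLinearMap.isSelfAdjoint_iff_isSymmetric]
    intro x y
    simp only [ContinuousLinearMap.coe_coe, hmain x, hmain y,
      inner_smul_left, inner_smul_right, inner_conj_symm]
    ring
  · rw [IsIdempotentElem]
    ext x
    rw [ContinuousLinearMap.mul_apply, hmain, hmain x, inner_smul_right, hvv,
      mul_one]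
end

section
/- For each i = 1,...,n, A_i A†_i = Σ_{j=0}^{i} A†_j A_j, where A_0 = P_Ω; equivalently, the support projection of A†_i equals the sum of the range projections A†_j A_j for j ≤ i. -/
open scoped Classical

theorem support_projection_sum
    {n : ℕ} {F : Type*} [NormedAddCommGroup F] [InnerProductSpace ℂ F]
    [CompleteSpace F] (E : HilbertBasis (Fin n → ℕ) ℂ F)
    (A Ad : Fin n → F →L[ℂ] F)
    (hAdj : ∀ i, Ad i = ContinuousLinearMap.adjoint (A i))
    (hA : ∀ i k, A i (E k) = if WMTop i k then E (wmDec k i) else 0)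
    (hAc : ∀ i k, Ad i (E k) = if WMCanCreate i k then E (wmInc k i) else 0)
    :
    ∀ i : Fin n,
      A i * Ad i =
        (A ⟨0, i.pos⟩ * Ad ⟨0, i.pos⟩ - Ad ⟨0, i.pos⟩ * A ⟨0, i.pos⟩) +
          ∑ j ∈ Finset.Iic i, Ad j * A j := by
  intro i
  set z : Fin n := ⟨0, i.pos⟩ with hzdef
  refine ContinuousLinearMap.ext_on
    (Submodule.dense_iff_topologicalClosure_eq_top.mpr E.dense_span) ?_
  rintro _ ⟨k, rfl⟩
  -- general computation lemmas
  have hAAd : ∀ m : Fin n, A m (Ad m (E k)) = if WMCanCreate m k then E k else 0 := by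
    intro m
    rw [hAc]
    split
    · next hc =>
      have htop : WMTop m (wmInc k m) := by
        refine ⟨by simp [wmInc], ?_⟩
        intro j hj
        have : (wmInc k m) j = k j := by
          simp [wmInc, Function.update_of_ne hj.ne']
        rw [this]; exact hc j hj
      have hdec : wmDec (wmInc k m) m = k := by
        funext j
        by_cases hj : j = m
        · subst hj; simp [wmDec, wmInc]
        · simp [wmDec, wmInc, Function.update_of_ne hj]
      rw [hA, if_pos htop, hdec]
    · simp
  have hAdA : ∀ m : Fin n, Ad m (A m (E k)) = if WMTop m k then E k else 0 := by
    intro m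
    rw [hA]
    split
    · next ht =>
      have hcan : WMCanCreate m (wmDec k m) := by
        intro j hj
        have : (wmDec k m) j = k j := by
          simp [wmDec, Function.update_of_ne hj.ne']
        rw [this]; exact ht.2 j hj
      have hinc : wmInc (wmDec k m) m = k := by
        funext j
        by_cases hj : j = m
        · subst hj
          simp [wmDec, wmInc, Nat.sub_add_cancel ht.1]
        · simp [wmDec, wmInc, Function.update_of_ne hj]
      rw [hAc, if_pos hcan, hinc]
    · simp
  simp only [ContinuousLinearMap.add_apply, ContinuousLinearMap.sub_apply,
    ContinuousLinearMap.mul_apply, ContinuousLinearMap.sum_apply]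
  rw [hAAd i, hAAd z, hAdA z]
  have hsum : (∑ j ∈ Finset.Iic i, Ad j (A j (E k)))
      = ∑ j ∈ Finset.Iic i, if WMTop j k then E k else 0 :=
    Finset.sum_congr rfl fun j _ => hAdA j
  rw [hsum]
  have hltz : ∀ j : Fin n, z < j ↔ j ≠ z := by
    intro j
    constructor
    · intro h he; subst he; exact lt_irrefl _ h
    · intro h
      have : (0 : ℕ) < j.val := Nat.pos_of_ne_zero (fun h0 => h (Fin.ext h0))
      exact this
  by_cases h0 : ∀ j, k j = 0
  · -- vacuum
    have hcz : WMCanCreate z k := fun j _ => h0 j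
    have hci : WMCanCreate i k := fun j _ => h0 j
    have hntz : ¬ WMTop z k := fun ht => by simp [WMTop, h0 z] at ht
    have hnt : ∀ j ∈ Finset.Iic i, (if WMTop j k then E k else (0:F)) = 0 := by
      intro j _
      rw [if_neg]
      intro ht; simp [WMTop, h0 j] at ht
    rw [if_pos hci, if_pos hcz, if_neg hntz, Finset.sum_eq_zero hnt]
    simp
  · push_neg at h0
    -- maximal index with nonzero multiplicity
    set S : Finset (Fin n) := Finset.univ.filter (fun j => k j ≠ 0) with hS
    have hSne : S.Nonempty := by
      obtain ⟨j, hj⟩ := h0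
      exact ⟨j, by simp [hS, hj]⟩
    set j0 : Fin n := S.max' hSne with hj0def
    have hj0ne : k j0 ≠ 0 := by
      have := S.max'_mem hSne
      simpa [hS] using this
    have hj0top : WMTop j0 k := by
      refine ⟨Nat.pos_of_ne_zero hj0ne, ?_⟩
      intro j hj
      by_contra hjne
      have : j ∈ S := by simp [hS, hjne]
      exact absurd (S.le_max' j this) (not_le.mpr hj)
    have huniq : ∀ j : Fin n, WMTop j k → j = j0 := by
      intro j hj
      rcases lt_trichotomy j j0 with h | h | h
      · exact absurd (hj.2 j0 h) hj0ne
      · exact h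
      · exact absurd (hj0top.2 j h) (ne_of_gt hj.1)
    -- the zero-index term vanishes in the non-vacuum case
    have hziff : WMCanCreate z k ↔ WMTop z k := by
      constructor
      · intro hc
        refine ⟨?_, fun j hj => hc j hj⟩
        obtain ⟨j, hj⟩ := h0
        by_cases hjz : j = z
        · exact Nat.pos_of_ne_zero (hjz ▸ hj)
        · exact absurd (hc j ((hltz j).mpr hjz)) hj
      · intro ht
        exact ht.2
    have hzcancel : (if WMCanCreate z k then E k else 0)
        - (if WMTop z k then E k else 0) = 0 := by
      by_cases hc : WMCanCreate z k
      · rw [if_pos hc, if_pos (hziff.mp hc), sub_self]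
      · rw [if_neg hc, if_neg (fun ht => hc (hziff.mpr ht)), sub_self]
    rw [hzcancel, zero_add]
    by_cases hcc : WMCanCreate i k
    · have hj0le : j0 ∈ Finset.Iic i := by
        rw [Finset.mem_Iic]
        by_contra h
        exact hj0ne (hcc j0 (not_le.mp h))
      rw [if_pos hcc,
        Finset.sum_eq_single_of_mem j0 hj0le
          (fun b _ hb => if_neg (fun ht => hb (huniq b ht))),
        if_pos hj0top]
    · rw [if_neg hcc]
      refine (Finset.sum_eq_zero ?_).symm
      intro j hj
      rw [Finset.mem_Iic] at hj
      exact if_neg (fun ht => hcc (fun j' hj' => ht.2 j' (lt_of_le_of_lt hj hj')))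
end

section
/- The projections P_Ω = A†_0 A_0 and A†_j A_j for j = 1,...,n are mutually orthogonal and sum to the identity: I = Σ_{j=0}^{n} A†_j A_j. -/
open scoped Classical

lemma wmInc_wmDec {n : ℕ} {i : Fin n} {k : Fin n → ℕ} (h : 0 < k i) :
    wmInc (wmDec k i) i = k := by
  funext l
  by_cases hl : l = i
  · subst hl
    simp only [wmInc, wmDec, Function.update_self]
    omega
  · simp [wmInc, wmDec, Function.update_of_ne hl]

lemma wmDec_wmInc {n : ℕ} (i : Fin n) (k : Fin n → ℕ) :
    wmDec (wmInc k i) i = k := by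
  funext l
  by_cases hl : l = i
  · subst hl; simp [wmInc, wmDec]
  · simp [wmInc, wmDec, Function.update_of_ne hl]

lemma wmTop_unique {n : ℕ} {i j : Fin n} {k : Fin n → ℕ}
    (hi : WMTop i k) (hj : WMTop j k) : i = j := by
  rcases lt_trichotomy i j with h | h | h
  · exact absurd hj.1 (by simp [hi.2 j h])
  · exact h
  · exact absurd hi.1 (by simp [hj.2 i h])

lemma wmTop_exists {n : ℕ} {k : Fin n → ℕ} (hk : k ≠ 0) : ∃ i, WMTop i k := by
  have hne : (Finset.univ.filter fun i => k i ≠ 0).Nonempty := by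
    by_contra h
    apply hk
    funext i
    by_contra hi
    exact h ⟨i, Finset.mem_filter.mpr ⟨Finset.mem_univ i, hi⟩⟩
  set i := (Finset.univ.filter fun i => k i ≠ 0).max' hne with hi
  refine ⟨i, Nat.pos_of_ne_zero ?_, fun j hj => ?_⟩
  · exact (Finset.mem_filter.mp ((Finset.univ.filter fun i => k i ≠ 0).max'_mem hne)).2
  · by_contra hkj
    exact absurd (Finset.le_max' _ j (Finset.mem_filter.mpr ⟨Finset.mem_univ j, hkj⟩))
      (not_le.mpr hj)

theorem range_projections_resolution_of_identity
    {n : ℕ} {F : Type*} [NormedAddCommGroup F] [InnerProductSpace ℂ F]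
    [CompleteSpace F] (E : HilbertBasis (Fin n → ℕ) ℂ F)
    (A Ad : Fin n → F →L[ℂ] F)
    (hAdj : ∀ i, Ad i = ContinuousLinearMap.adjoint (A i))
    (hA : ∀ i k, A i (E k) = if WMTop i k then E (wmDec k i) else 0)
    (hAc : ∀ i k, Ad i (E k) = if WMCanCreate i k then E (wmInc k i) else 0)
    (hn : 0 < n)
    (P₀ : F →L[ℂ] F)
    (hP₀ : P₀ = A ⟨0, hn⟩ * Ad ⟨0, hn⟩ - Ad ⟨0, hn⟩ * A ⟨0, hn⟩)
    :
    (∀ j k : Fin n, j ≠ k → (Ad j * A j) * (Ad k * A k) = 0) ∧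
      (∀ j : Fin n, P₀ * (Ad j * A j) = 0 ∧ (Ad j * A j) * P₀ = 0) ∧
      P₀ + ∑ j : Fin n, Ad j * A j = 1 := by
  -- the key formula : Ad j * A j acts as the projection onto the span of top-`j` vectors
  have hdense : Dense ((Submodule.span ℂ (Set.range E) : Submodule ℂ F) : Set F) := by
    rw [Submodule.dense_iff_topologicalClosure_eq_top]
    exact E.dense_span
  have ext_basis : ∀ (T S : F →L[ℂ] F), (∀ k, T (E k) = S (E k)) → T = S := by
    intro T S h
    refine ContinuousLinearMap.ext_on hdense ?_
    rintro x ⟨k, rfl⟩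
    exact h k
  have hNum : ∀ (j : Fin n) (k : Fin n → ℕ),
      (Ad j * A j) (E k) = if WMTop j k then E k else 0 := by
    intro j k
    rw [ContinuousLinearMap.mul_apply, hA]
    by_cases h : WMTop j k
    · rw [if_pos h, hAc, if_pos, wmInc_wmDec h.1, if_pos h]
      intro l hl
      rw [wmDec, Function.update_of_ne (ne_of_gt hl)]
      exact h.2 l hl
    · simp [h]
  set i0 : Fin n := ⟨0, hn⟩ with hi0
  have hlt0 : ∀ j : Fin n, j ≠ i0 → i0 < j := by
    intro j hj
    exact Fin.lt_def.mpr (Nat.pos_of_ne_zero (fun h => hj (Fin.ext h)))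
  have hP₀app : ∀ k : Fin n → ℕ, P₀ (E k) = if k = 0 then E k else 0 := by
    intro k
    rw [hP₀]
    simp only [ContinuousLinearMap.sub_apply, ContinuousLinearMap.mul_apply]
    rw [hAc, hA]
    by_cases hc : WMCanCreate i0 k
    · rw [if_pos hc, hA, if_pos, wmDec_wmInc]
      by_cases ht : WMTop i0 k
      · rw [if_pos ht, hAc,
          if_pos (show WMCanCreate i0 (wmDec k i0) from fun l hl => by
            rw [wmDec, Function.update_of_ne (ne_of_gt hl)]; exact ht.2 l hl),
          wmInc_wmDec ht.1, sub_self, if_neg]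
        intro h0
        rw [h0] at ht
        exact absurd ht.1 (by simp)
      · rw [if_neg ht, map_zero, sub_zero, if_pos]
        funext l
        by_cases hl : l = i0
        · subst hl
          by_contra hne
          exact ht ⟨Nat.pos_of_ne_zero hne, hc⟩
        · exact hc l (hlt0 l hl)
      · refine ⟨by simp [wmInc], fun l hl => ?_⟩
        rw [wmInc, Function.update_of_ne (ne_of_gt hl)]
        exact hc l hl
    · have ht : ¬ WMTop i0 k := fun h => hc h.2
      rw [if_neg hc, if_neg ht, map_zero, map_zero, sub_zero, if_neg]
      intro h0
      apply hc
      intro l _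
      simp [h0]
  refine ⟨?_, ?_, ?_⟩
  · intro j k hjk
    refine ext_basis _ _ fun m => ?_
    rw [ContinuousLinearMap.mul_apply, hNum, ContinuousLinearMap.zero_apply]
    by_cases h : WMTop k m
    · rw [if_pos h, hNum, if_neg (fun h' => hjk (wmTop_unique h' h))]
    · simp [h]
  · intro j
    constructor
    · refine ext_basis _ _ fun m => ?_
      rw [ContinuousLinearMap.mul_apply, hNum, ContinuousLinearMap.zero_apply]
      by_cases h : WMTop j m
      · rw [if_pos h, hP₀app, if_neg]
        intro h0
        rw [h0] at h
        exact absurd h.1 (by simp)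
      · simp [h]
    · refine ext_basis _ _ fun m => ?_
      rw [ContinuousLinearMap.mul_apply, hP₀app, ContinuousLinearMap.zero_apply]
      by_cases h : m = 0
      · rw [if_pos h, hNum, if_neg]
        intro h'
        rw [h] at h'
        exact absurd h'.1 (by simp)
      · simp [h]
  · refine ext_basis _ _ fun m => ?_
    rw [ContinuousLinearMap.add_apply, ContinuousLinearMap.sum_apply,
      ContinuousLinearMap.one_apply, hP₀app]
    have hsum : ∑ j : Fin n, (Ad j * A j) (E m)
        = ∑ j : Fin n, if WMTop j m then E m else 0 := by
      exact Finset.sum_congr rfl fun j _ => hNum j m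
    rw [hsum]
    by_cases h : m = 0
    · rw [if_pos h, Finset.sum_eq_zero, add_zero]
      intro j _
      rw [if_neg]
      intro h'
      rw [h] at h'
      exact absurd h'.1 (by simp)
    · obtain ⟨i, hi⟩ := wmTop_exists h
      rw [if_neg h, zero_add, Finset.sum_eq_single i]
      · rw [if_pos hi]
      · intro j _ hj
        exact if_neg fun h' => hj (wmTop_unique h' hi)
      · intro hi'; exact absurd (Finset.mem_univ i) hi'
end

section
/- For every w on the unit circle there is a unitary operator U_w on the weakly monotone Fock space defined on the basis by U_w(e_n^{k_n}⊗···⊗e_1^{k_1}) = w̄^{k_1+···+k_n} e_n^{k_n}⊗···⊗e_1^{k_1} and U_w(Ω) = Ω, such that U_w A_i U_w* = w A_i for each i = 1,...,n. -/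
open scoped Classical

lemma wmDec_sum {n : ℕ} (k : Fin n → ℕ) (i : Fin n) (hki : 0 < k i) :
    ∑ j, wmDec k i j = (∑ j, k j) - 1 := by
  unfold wmDec
  rw [Finset.sum_update_of_mem (Finset.mem_univ i)]
  rw [← Finset.add_sum_erase _ k (Finset.mem_univ i), Finset.sdiff_singleton_eq_erase]
  omega

lemma sum_pos_of_top {n : ℕ} {i : Fin n} {k : Fin n → ℕ} (hki : 0 < k i) :
    0 < ∑ j, k j :=
  Finset.sum_pos' (fun _ _ => Nat.zero_le _) ⟨i, Finset.mem_univ i, hki⟩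

theorem gauge_unitaries
    {n : ℕ} {F : Type*} [NormedAddCommGroup F] [InnerProductSpace ℂ F]
    [CompleteSpace F] (E : HilbertBasis (Fin n → ℕ) ℂ F)
    (A Ad : Fin n → F →L[ℂ] F)
    (hAdj : ∀ i, Ad i = ContinuousLinearMap.adjoint (A i))
    (hA : ∀ i k, A i (E k) = if WMTop i k then E (wmDec k i) else 0)
    (hAc : ∀ i k, Ad i (E k) = if WMCanCreate i k then E (wmInc k i) else 0)
    :
    ∀ w : ℂ, ‖w‖ = 1 →
      ∃ U : F →L[ℂ] F, U ∈ unitary (F →L[ℂ] F) ∧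
        (∀ k : Fin n → ℕ,
          U (E k) = (starRingEnd ℂ w) ^ (∑ j, k j) • E k) ∧
        ∀ i : Fin n, U * A i * star U = w • A i := by
  intro w hw
  set c : (Fin n → ℕ) → ℂ := fun k => (starRingEnd ℂ w) ^ (∑ j, k j) with hc_def
  have hwc : w * starRingEnd ℂ w = 1 := by
    rw [Complex.mul_conj]
    norm_cast
    rw [Complex.normSq_eq_norm_sq, hw, one_pow]
  have hcnorm : ∀ k, ‖c k‖ = 1 := by
    intro k
    simp [hc_def, norm_pow, hw]
  have hcne : ∀ k, c k ≠ 0 := fun k => by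
    intro h; simpa [h] using hcnorm k
  set v : (Fin n → ℕ) → F := fun k => c k • E k with hv_def
  have hon : Orthonormal ℂ v := by
    constructor
    · intro k
      rw [hv_def]
      simp only [norm_smul, hcnorm, one_mul]
      exact E.orthonormal.1 k
    · intro j k hjk
      simp only [hv_def, inner_smul_left, inner_smul_right,
        E.orthonormal.2 hjk, mul_zero]
  have hspan : Submodule.span ℂ (Set.range v) = Submodule.span ℂ (Set.range ⇑E) := by
    apply le_antisymm
    · rw [Submodule.span_le]
      rintro _ ⟨k, rfl⟩
      exact Submodule.smul_mem _ _ (Submodule.subset_span ⟨k, rfl⟩)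
    · rw [Submodule.span_le]
      rintro _ ⟨k, rfl⟩
      have : (E k : F) = (c k)⁻¹ • v k := by
        rw [hv_def]; simp [smul_smul, inv_mul_cancel₀ (hcne k)]
      rw [this]
      exact Submodule.smul_mem _ _ (Submodule.subset_span ⟨k, rfl⟩)
  have hsp : ⊤ ≤ (Submodule.span ℂ (Set.range v)).topologicalClosure := by
    rw [hspan]
    exact E.dense_span.ge
  set E' : HilbertBasis (Fin n → ℕ) ℂ F := HilbertBasis.mk hon hsp with hE'_def
  have hE' : ∀ k, (E' k : F) = c k • E k := by
    intro k; rw [hE'_def, HilbertBasis.coe_mk]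
  set Ul : F ≃ₗᵢ[ℂ] F := E.repr.trans E'.repr.symm with hUl_def
  have hUlE : ∀ k, Ul (E k) = c k • E k := by
    intro k
    rw [hUl_def]
    simp only [LinearIsometryEquiv.trans_apply]
    rw [HilbertBasis.repr_self, HilbertBasis.repr_symm_single]
    exact hE' k
  set U : F →L[ℂ] F := Ul.toLinearIsometry.toContinuousLinearMap with hU_def
  set V : F →L[ℂ] F := Ul.symm.toLinearIsometry.toContinuousLinearMap with hV_def
  have hUapp : ∀ x, U x = Ul x := fun x => rfl
  have hVapp : ∀ x, V x = Ul.symm x := fun x => rfl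
  have hadj : star U = V := by
    rw [ContinuousLinearMap.star_eq_adjoint]
    symm
    rw [ContinuousLinearMap.eq_adjoint_iff]
    intro x y
    rw [hVapp, hUapp, ← Ul.inner_map_map (Ul.symm x) y,
      LinearIsometryEquiv.apply_symm_apply]
  have hVU : V * U = 1 := by
    ext x
    simp [hUapp, hVapp]
  have hUV : U * V = 1 := by
    ext x
    simp [hUapp, hVapp]
  refine ⟨U, ?_, ?_, ?_⟩
  · rw [Unitary.mem_iff, hadj]
    exact ⟨hVU, hUV⟩
  · intro k
    rw [hUapp, hUlE]
  · intro i
    have key : U * A i = w • (A i * U) := by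
      apply ContinuousLinearMap.ext_on (Submodule.dense_iff_topologicalClosure_eq_top.mpr E.dense_span)
      rintro _ ⟨k, rfl⟩
      simp only [ContinuousLinearMap.mul_apply, ContinuousLinearMap.smul_apply]
      by_cases ht : WMTop i k
      · have h1 : A i (E k) = E (wmDec k i) := by rw [hA, if_pos ht]
        have h2 : A i (c k • (E k : F)) = c k • E (wmDec k i) := by
          rw [map_smul, h1]
        rw [h1, hUapp, hUlE, hUapp, hUlE, h2, smul_smul]
        congr 1
        have hki : 0 < k i := ht.1
        have hsum : ∑ j, wmDec k i j = (∑ j, k j) - 1 := wmDec_sum k i hki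
        have hpos : 0 < ∑ j, k j := sum_pos_of_top hki
        simp only [hc_def, hsum]
        rw [mul_comm]
        symm
        calc (starRingEnd ℂ w) ^ (∑ j, k j) * w
            = (starRingEnd ℂ w) ^ ((∑ j, k j) - 1) * (starRingEnd ℂ w * w) := by
              rw [← mul_assoc, ← pow_succ, Nat.sub_add_cancel hpos]
          _ = (starRingEnd ℂ w) ^ ((∑ j, k j) - 1) := by
              rw [mul_comm (starRingEnd ℂ w) w, hwc, mul_one]
      · have h1 : A i (E k) = 0 := by rw [hA, if_neg ht]
        have h2 : A i (c k • (E k : F)) = 0 := by rw [map_smul, h1, smul_zero]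
        rw [h1, map_zero, hUapp, hUlE, h2, smul_zero]
    calc U * A i * star U = w • (A i * U) * star U := by rw [mul_assoc, ← key, mul_assoc]
      _ = w • (A i * (U * star U)) := by rw [smul_mul_assoc, mul_assoc]
      _ = w • A i := by rw [hadj, hUV, mul_one]
end

section
/- Let α and β be multi-indices with entries in {1,...,n}. Then for every basis vector ε = e_n^{k_n}⊗···⊗e_1^{k_1} of the weakly monotone Fock space, the diagonal matrix element ⟨A†_β A_α ε, ε⟩ equals 1 if α = β (suitably ordered) and is 0 whenever α ≠ β, provided both α and β are weakly decreasing along the order of application; in particular the diagonal compression of any monomial A†_β A_α is a diagonal operator lying in the algebra generated by the projections A†_γ A_γ. -/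
open scoped Classical

/-- Abstract annihilation of a list of indices on a multiplicity function. -/
noncomputable def wmAnn {n : ℕ} : List (Fin n) → (Fin n → ℕ) → Option (Fin n → ℕ)
  | [], k => some k
  | i :: t, k => (wmAnn t k).bind fun k' => if WMTop i k' then some (wmDec k' i) else none

lemma wmAnn_prod_apply {n : ℕ} {F : Type*} [NormedAddCommGroup F]
    [InnerProductSpace ℂ F] (E : HilbertBasis (Fin n → ℕ) ℂ F)
    (A : Fin n → F →L[ℂ] F)
    (hA : ∀ i k, A i (E k) = if WMTop i k then E (wmDec k i) else 0)
    (α : List (Fin n)) (k : Fin n → ℕ) :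
    (α.map A).prod (E k) = (wmAnn α k).elim 0 (fun k' => E k') := by
  induction α with
  | nil => simp [wmAnn]
  | cons i t ih =>
    simp only [List.map_cons, List.prod_cons, ContinuousLinearMap.mul_apply, ih, wmAnn]
    cases h : wmAnn t k with
    | none => simp
    | some k' =>
      simp only [Option.elim, hA i k']
      rcases Classical.em (WMTop i k') with ht | ht
      · simp only [Option.bind_some, if_pos ht, Option.elim]
      · simp only [Option.bind_some, if_neg ht, Option.elim]

lemma wmAnn_count {n : ℕ} {α : List (Fin n)} {k k' : Fin n → ℕ}
    (h : wmAnn α k = some k') : ∀ i, k' i + α.count i = k i := by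
  induction α generalizing k' with
  | nil => simp only [wmAnn, Option.some.injEq] at h; subst h; simp
  | cons j t ih =>
    simp only [wmAnn, Option.bind_eq_some_iff] at h
    obtain ⟨k'', h1, h2⟩ := h
    split_ifs at h2 with htop
    · injection h2 with h2; subst h2
      intro i
      have hc := ih h1 i
      rcases eq_or_ne i j with rfl | hne
      · have hpos : 0 < k'' i := htop.1
        simp only [wmDec, Function.update_self, List.count_cons_self]
        omega
      · simp only [wmDec, Function.update_of_ne hne, List.count_cons_of_ne hne.symm]
        omega

lemma wmAnn_sorted_eq {n : ℕ} {α β : List (Fin n)}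
    (hα : List.Pairwise (· ≤ ·) α) (hβ : List.Pairwise (· ≤ ·) β)
    {k k' : Fin n → ℕ}
    (h1 : wmAnn α k = some k') (h2 : wmAnn β k = some k') : α = β := by
  have hcount : ∀ i, α.count i = β.count i := by
    intro i
    have := wmAnn_count h1 i
    have := wmAnn_count h2 i
    omega
  exact List.Perm.eq_of_pairwise' hα hβ (List.perm_iff_count.mpr hcount)

theorem diagonal_matrix_elements
    {n : ℕ} {F : Type*} [NormedAddCommGroup F] [InnerProductSpace ℂ F]
    [CompleteSpace F] (E : HilbertBasis (Fin n → ℕ) ℂ F)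
    (A Ad : Fin n → F →L[ℂ] F)
    (hAdj : ∀ i, Ad i = ContinuousLinearMap.adjoint (A i))
    (hA : ∀ i k, A i (E k) = if WMTop i k then E (wmDec k i) else 0)
    (hAc : ∀ i k, Ad i (E k) = if WMCanCreate i k then E (wmInc k i) else 0)
    :
    ∀ α β : List (Fin n), List.Pairwise (· ≤ ·) α → List.Pairwise (· ≤ ·) β →
      ∀ k : Fin n → ℕ,
        (α = β → (α.map A).prod (E k) ≠ 0 →
          (inner ℂ (E k) ((star ((β.map A).prod) * (α.map A).prod) (E k)) : ℂ) = 1) ∧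
        (α ≠ β →
          (inner ℂ (E k) ((star ((β.map A).prod) * (α.map A).prod) (E k)) : ℂ) = 0) := by
  intro α β hα hβ k
  have horth := E.orthonormal
  rw [orthonormal_iff_ite] at horth
  have key : (inner ℂ (E k) ((star ((β.map A).prod) * (α.map A).prod) (E k)) : ℂ)
      = inner ℂ ((β.map A).prod (E k)) ((α.map A).prod (E k)) := by
    rw [ContinuousLinearMap.mul_apply, ContinuousLinearMap.star_eq_adjoint,
      ContinuousLinearMap.adjoint_inner_right]
  constructor
  · rintro rfl hne
    rw [key]
    rw [wmAnn_prod_apply E A hA α k] at hne ⊢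
    cases h : wmAnn α k with
    | none => rw [h] at hne; simp at hne
    | some k' => simp [horth, E.orthonormal.1 k']
  · intro hne
    rw [key, wmAnn_prod_apply E A hA, wmAnn_prod_apply E A hA]
    cases h1 : wmAnn α k with
    | none => simp
    | some k1 =>
      cases h2 : wmAnn β k with
      | none => simp
      | some k2 =>
        simp only [Option.elim]
        rw [horth]
        have hk : k2 ≠ k1 := fun h => hne (wmAnn_sorted_eq hα hβ h1 (h ▸ h2))
        simp [hk]
end

section
/- For μ = (μ_1,...,μ_n) ∈ N_0^n set A_μ := A_1^{μ_1}···A_n^{μ_n} and P_μ := A_μ* A_μ. If μ ≠ ν and P_μ P_ν ≠ 0, then P_μ P_ν = P_μ if and only if ν ≺ μ, where ν ≺ μ means: there is k such that ν_j = μ_j for j > k, ν_k < μ_k, and ν_j = 0 ≤ μ_j for j < k. -/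
open scoped Classical

/-- The domain condition: `P μ` is the orthogonal projection onto the closed span of the
basis vectors `E k` with `WMDom μ k`. -/
def WMDom {n : ℕ} (μ k : Fin n → ℕ) : Prop :=
  (∀ j, μ j ≤ k j) ∧ ∀ j i : Fin n, j < i → 0 < μ j → k i = μ i

lemma star_list_prod {M : Type*} [Monoid M] [StarMul M] (l : List M) :
    star l.prod = (l.map star).reverse.prod := by
  induction l with
  | nil => simp
  | cons a l ih =>
    rw [List.prod_cons, star_mul, ih, List.map_cons, List.reverse_cons, List.prod_append,
      List.prod_singleton]

section aux
variable {n : ℕ} {F : Type*} [NormedAddCommGroup F] [InnerProductSpace ℂ F]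
  [CompleteSpace F]

set_option linter.unusedSectionVars false

lemma wm_pow_apply (E : HilbertBasis (Fin n → ℕ) ℂ F)
    (A : Fin n → F →L[ℂ] F)
    (hA : ∀ i k, A i (E k) = if WMTop i k then E (wmDec k i) else 0)
    (i : Fin n) (m : ℕ) (k : Fin n → ℕ) :
    ((A i) ^ m) (E k) =
      if m ≤ k i ∧ (m = 0 ∨ WMCanCreate i k)
      then E (Function.update k i (k i - m)) else 0 := by
  induction m generalizing k with
  | zero =>
    rw [pow_zero, if_pos ⟨Nat.zero_le _, Or.inl rfl⟩]
    simp [Function.update_eq_self]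
  | succ m ih =>
    rw [pow_succ, ContinuousLinearMap.mul_apply, hA i k]
    by_cases h : WMTop i k
    · rw [if_pos h, ih]
      obtain ⟨hpos, hcc⟩ := h
      have hdecsame : wmDec k i i = k i - 1 := Function.update_self _ _ _
      have hcc' : WMCanCreate i (wmDec k i) := by
        intro j hj
        rw [wmDec, Function.update_of_ne hj.ne']
        exact hcc j hj
      by_cases hm : m + 1 ≤ k i
      · rw [if_pos ⟨by omega, Or.inr hcc'⟩, if_pos ⟨hm, Or.inr hcc⟩]
        congr 1
        funext j
        rcases eq_or_ne j i with rfl | hj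
        · simp only [wmDec, Function.update_self]
          omega
        · simp only [wmDec, Function.update_of_ne hj]
      · rw [if_neg, if_neg]
        · intro hc; exact hm hc.1
        · intro hc; rw [hdecsame] at hc; omega
    · rw [if_neg h, map_zero, if_neg]
      rintro ⟨h1, h2 | h2⟩
      · omega
      · exact h ⟨by omega, h2⟩

lemma wm_cpow_apply (E : HilbertBasis (Fin n → ℕ) ℂ F)
    (Ad : Fin n → F →L[ℂ] F)
    (hAc : ∀ i k, Ad i (E k) = if WMCanCreate i k then E (wmInc k i) else 0)
    (i : Fin n) (m : ℕ) (k : Fin n → ℕ) :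
    ((Ad i) ^ m) (E k) =
      if m = 0 ∨ WMCanCreate i k
      then E (Function.update k i (k i + m)) else 0 := by
  induction m generalizing k with
  | zero =>
    rw [pow_zero, if_pos (Or.inl rfl)]
    simp [Function.update_eq_self]
  | succ m ih =>
    rw [pow_succ, ContinuousLinearMap.mul_apply, hAc i k]
    by_cases h : WMCanCreate i k
    · rw [if_pos h, ih]
      have hcc' : WMCanCreate i (wmInc k i) := by
        intro j hj
        rw [wmInc, Function.update_of_ne hj.ne']
        exact h j hj
      rw [if_pos (Or.inr hcc'), if_pos (Or.inr h)]
      congr 1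
      funext j
      rcases eq_or_ne j i with rfl | hj
      · simp only [wmInc, Function.update_self]
        omega
      · simp only [wmInc, Function.update_of_ne hj]
    · rw [if_neg h, map_zero, if_neg]
      rintro (h1 | h1)
      · omega
      · exact h h1

lemma wm_drop_prod_apply (E : HilbertBasis (Fin n → ℕ) ℂ F)
    (A : Fin n → F →L[ℂ] F)
    (hA : ∀ i k, A i (E k) = if WMTop i k then E (wmDec k i) else 0)
    (μ k : Fin n → ℕ) :
    ∀ (m t : ℕ), n = t + m →
      (((List.ofFn fun j : Fin n => (A j) ^ (μ j)).drop t).prod) (E k) =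
        if (∀ j : Fin n, t ≤ (j : ℕ) → μ j ≤ k j) ∧
           (∀ j i : Fin n, t ≤ (j : ℕ) → j < i → 0 < μ j → k i = μ i)
        then E (fun j => if t ≤ (j : ℕ) then k j - μ j else k j) else 0 := by
  have hpow := wm_pow_apply E A hA
  intro m
  induction m with
  | zero =>
    intro t ht
    have ht' : t = n := by omega
    subst ht'
    rw [List.drop_eq_nil_of_le (by simp), List.prod_nil, ContinuousLinearMap.one_apply,
      if_pos ⟨fun j hj => absurd j.isLt (by omega), fun j i hj _ _ => absurd j.isLt (by omega)⟩]
    congr 1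
    funext j
    rw [if_neg (by omega)]
  | succ m ih =>
    intro t ht
    have htn : t < n := by omega
    have hlen : t < (List.ofFn fun j : Fin n => (A j) ^ (μ j)).length := by
      simpa using htn
    rw [List.drop_eq_getElem_cons hlen, List.prod_cons, ContinuousLinearMap.mul_apply,
      ih (t + 1) (by omega), List.getElem_ofFn]
    have hvt : (((⟨t, htn⟩ : Fin n)) : ℕ) = t := rfl
    by_cases hD : (∀ j : Fin n, t + 1 ≤ (j : ℕ) → μ j ≤ k j) ∧
        (∀ j i : Fin n, t + 1 ≤ (j : ℕ) → j < i → 0 < μ j → k i = μ i)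
    · rw [if_pos hD, hpow]
      have hkt : (if t + 1 ≤ (((⟨t, htn⟩ : Fin n)) : ℕ)
          then k ⟨t, htn⟩ - μ ⟨t, htn⟩ else k ⟨t, htn⟩) = k ⟨t, htn⟩ := by
        rw [if_neg (by omega)]
      have hCiff : (μ ⟨t, htn⟩ ≤ (fun j : Fin n => if t + 1 ≤ (j : ℕ) then k j - μ j else k j)
              ⟨t, htn⟩ ∧
            (μ ⟨t, htn⟩ = 0 ∨ WMCanCreate (⟨t, htn⟩ : Fin n)
              (fun j : Fin n => if t + 1 ≤ (j : ℕ) then k j - μ j else k j))) ↔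
          ((∀ j : Fin n, t ≤ (j : ℕ) → μ j ≤ k j) ∧
           (∀ j i : Fin n, t ≤ (j : ℕ) → j < i → 0 < μ j → k i = μ i)) := by
        simp only [WMCanCreate, hkt]
        constructor
        · rintro ⟨h1, h2⟩
          constructor
          · intro j hj
            rcases eq_or_lt_of_le hj with he | hl
            · have hje : j = ⟨t, htn⟩ := Fin.ext he.symm
              rw [hje]; exact h1
            · exact hD.1 j hl
          · intro j i hj hji hposj
            rcases eq_or_lt_of_le hj with he | hl
            · have hje : j = ⟨t, htn⟩ := Fin.ext he.symm
              subst hje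
              rcases h2 with h2 | h2
              · omega
              · have hz := h2 i hji
                have hile : t + 1 ≤ (i : ℕ) := hji
                rw [if_pos hile] at hz
                have := hD.1 i hile
                omega
            · exact hD.2 j i hl hji hposj
        · rintro ⟨h1, h2⟩
          refine ⟨h1 ⟨t, htn⟩ (le_of_eq hvt.symm), ?_⟩
          by_cases hμ : μ ⟨t, htn⟩ = 0
          · exact Or.inl hμ
          · refine Or.inr fun j hj => ?_
            have hjle : t + 1 ≤ (j : ℕ) := hj
            rw [if_pos hjle]
            have := h2 ⟨t, htn⟩ j (le_of_eq hvt.symm) hj (Nat.pos_of_ne_zero hμ)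
            omega
      have hfun : Function.update (fun j : Fin n => if t + 1 ≤ (j : ℕ) then k j - μ j else k j)
            ⟨t, htn⟩
            ((fun j : Fin n => if t + 1 ≤ (j : ℕ) then k j - μ j else k j) ⟨t, htn⟩ - μ ⟨t, htn⟩)
          = fun j : Fin n => if t ≤ (j : ℕ) then k j - μ j else k j := by
        funext j
        rcases eq_or_ne j ⟨t, htn⟩ with rfl | hj
        · rw [Function.update_self]
          beta_reduce
          rw [hkt, if_pos (le_of_eq hvt.symm)]
        · rw [Function.update_of_ne hj]
          have hjt : (j : ℕ) ≠ t := fun hc => hj (Fin.ext hc)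
          show (if t + 1 ≤ (j : ℕ) then k j - μ j else k j) = _
          by_cases hle : t + 1 ≤ (j : ℕ)
          · rw [if_pos hle, if_pos (by omega)]
          · rw [if_neg hle, if_neg (by omega)]
      rw [hfun, if_congr hCiff rfl rfl]
    · rw [if_neg hD, map_zero, if_neg]
      rintro ⟨h1, h2⟩
      exact hD ⟨fun j hj => h1 j (by omega), fun j i hj => h2 j i (by omega)⟩

lemma wm_take_rev_prod_apply (E : HilbertBasis (Fin n → ℕ) ℂ F)
    (Ad : Fin n → F →L[ℂ] F)
    (hAc : ∀ i k, Ad i (E k) = if WMCanCreate i k then E (wmInc k i) else 0)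
    (μ l : Fin n → ℕ) :
    ∀ t : ℕ, t ≤ n →
      ((((List.ofFn fun j : Fin n => (Ad j) ^ (μ j)).take t).reverse).prod) (E l) =
        if (∀ j i : Fin n, (j : ℕ) < t → j < i → 0 < μ j → l i = 0)
        then E (fun j => if (j : ℕ) < t then l j + μ j else l j) else 0 := by
  have hcpow := wm_cpow_apply E Ad hAc
  intro t
  induction t with
  | zero =>
    intro _
    rw [List.take_zero, List.reverse_nil, List.prod_nil, ContinuousLinearMap.one_apply,
      if_pos (fun j i hj => absurd hj (by omega))]
    congr 1
  | succ t ih =>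
    intro htn1
    have htn : t < n := by omega
    have hlen : t < (List.ofFn fun j : Fin n => (Ad j) ^ (μ j)).length := by
      simpa using htn
    have hvt : (((⟨t, htn⟩ : Fin n)) : ℕ) = t := rfl
    rw [List.take_succ, List.getElem?_eq_getElem hlen, List.getElem_ofFn]
    rw [show ((some ((Ad (⟨t, htn⟩ : Fin n)) ^ (μ ⟨t, htn⟩))).toList)
        = [(Ad (⟨t, htn⟩ : Fin n)) ^ (μ ⟨t, htn⟩)] from rfl]
    rw [List.reverse_append, List.reverse_singleton, List.singleton_append, List.prod_cons,
      ContinuousLinearMap.mul_apply, ih (by omega)]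
    by_cases hC : ∀ j i : Fin n, (j : ℕ) < t → j < i → 0 < μ j → l i = 0
    · rw [if_pos hC, hcpow]
      have hlt : (if (((⟨t, htn⟩ : Fin n)) : ℕ) < t then l ⟨t, htn⟩ + μ ⟨t, htn⟩ else l ⟨t, htn⟩)
          = l ⟨t, htn⟩ := by rw [if_neg (by omega)]
      have hCiff : (μ ⟨t, htn⟩ = 0 ∨ WMCanCreate (⟨t, htn⟩ : Fin n)
            (fun j : Fin n => if (j : ℕ) < t then l j + μ j else l j)) ↔
          (∀ j i : Fin n, (j : ℕ) < t + 1 → j < i → 0 < μ j → l i = 0) := by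
        simp only [WMCanCreate]
        constructor
        · rintro h j i hj hji hposj
          rcases Nat.lt_or_ge (j : ℕ) t with hl | hg
          · exact hC j i hl hji hposj
          · have hje : j = ⟨t, htn⟩ := Fin.ext (by omega)
            subst hje
            rcases h with h | h
            · omega
            · have hz := h i hji
              beta_reduce at hz
              rwa [if_neg (by have : (⟨t, htn⟩ : Fin n) < i := hji; omega)] at hz
        · intro h
          by_cases hμ : μ ⟨t, htn⟩ = 0
          · exact Or.inl hμ
          · refine Or.inr fun j hj => ?_
            have hjt : (t : ℕ) < (j : ℕ) := hj
            rw [if_neg (by omega)]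
            exact h ⟨t, htn⟩ j (by omega) hj (Nat.pos_of_ne_zero hμ)
      have hfun : Function.update (fun j : Fin n => if (j : ℕ) < t then l j + μ j else l j)
            ⟨t, htn⟩
            ((fun j : Fin n => if (j : ℕ) < t then l j + μ j else l j) ⟨t, htn⟩ + μ ⟨t, htn⟩)
          = fun j : Fin n => if (j : ℕ) < t + 1 then l j + μ j else l j := by
        funext j
        rcases eq_or_ne j ⟨t, htn⟩ with rfl | hj
        · rw [Function.update_self]
          beta_reduce
          rw [hlt, if_pos (by omega)]
        · rw [Function.update_of_ne hj]
          have hjt : (j : ℕ) ≠ t := fun hc => hj (Fin.ext hc)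
          show (if (j : ℕ) < t then l j + μ j else l j) = _
          by_cases hle : (j : ℕ) < t
          · rw [if_pos hle, if_pos (by omega)]
          · rw [if_neg hle, if_neg (by omega)]
      rw [hfun, if_congr hCiff rfl rfl]
    · rw [if_neg hC, map_zero, if_neg]
      intro h
      exact hC fun j i hj => h j i (by omega)

lemma wm_star_prod (A Ad : Fin n → F →L[ℂ] F)
    (hAdj : ∀ i, Ad i = ContinuousLinearMap.adjoint (A i)) (μ : Fin n → ℕ) :
    star ((List.ofFn fun j : Fin n => (A j) ^ (μ j)).prod)
      = (((List.ofFn fun j : Fin n => (Ad j) ^ (μ j)).take n).reverse).prod := by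
  rw [star_list_prod, List.map_ofFn]
  have : ((star : (F →L[ℂ] F) → (F →L[ℂ] F)) ∘ fun j : Fin n => (A j) ^ (μ j))
      = fun j : Fin n => (Ad j) ^ (μ j) := by
    funext j
    simp only [Function.comp_apply, star_pow, ContinuousLinearMap.star_eq_adjoint, hAdj]
  rw [this]
  congr 2
  exact (List.take_of_length_le (by simp)).symm

lemma wm_P_apply (E : HilbertBasis (Fin n → ℕ) ℂ F)
    (A Ad : Fin n → F →L[ℂ] F)
    (hAdj : ∀ i, Ad i = ContinuousLinearMap.adjoint (A i))
    (hA : ∀ i k, A i (E k) = if WMTop i k then E (wmDec k i) else 0)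
    (hAc : ∀ i k, Ad i (E k) = if WMCanCreate i k then E (wmInc k i) else 0)
    (μ k : Fin n → ℕ) :
    (star ((List.ofFn fun j : Fin n => (A j) ^ (μ j)).prod)
      * (List.ofFn fun j : Fin n => (A j) ^ (μ j)).prod) (E k)
      = if WMDom μ k then E k else 0 := by
  have hAw : ((List.ofFn fun j : Fin n => (A j) ^ (μ j)).prod) (E k)
      = if WMDom μ k then E (fun j => k j - μ j) else 0 := by
    have h0 := wm_drop_prod_apply E A hA μ k n 0 (by omega)
    rw [List.drop_zero] at h0
    have hiff : ((∀ j : Fin n, 0 ≤ (j : ℕ) → μ j ≤ k j) ∧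
        (∀ j i : Fin n, 0 ≤ (j : ℕ) → j < i → 0 < μ j → k i = μ i)) ↔ WMDom μ k :=
      ⟨fun ⟨a, b⟩ => ⟨fun j => a j (Nat.zero_le _), fun j i hji => b j i (Nat.zero_le _) hji⟩,
       fun ⟨a, b⟩ => ⟨fun j _ => a j, fun j i _ hji => b j i hji⟩⟩
    have hval : (fun j : Fin n => if (0 : ℕ) ≤ (j : ℕ) then k j - μ j else k j)
        = fun j => k j - μ j := by
      funext j
      rw [if_pos (Nat.zero_le _)]
    rw [h0, hval, if_congr hiff rfl rfl]
  rw [ContinuousLinearMap.mul_apply, hAw]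
  by_cases hD : WMDom μ k
  · rw [if_pos hD, if_pos hD, wm_star_prod A Ad hAdj μ,
      wm_take_rev_prod_apply E Ad hAc μ (fun j => k j - μ j) n (le_refl n), if_pos ?_]
    · congr 1
      funext j
      rw [if_pos j.isLt]
      exact Nat.sub_add_cancel (hD.1 j)
    · intro j i _ hji hposj
      rw [hD.2 j i hji hposj]
      omega
  · rw [if_neg hD, if_neg hD, map_zero]

end aux

theorem projection_product_order
    {n : ℕ} {F : Type*} [NormedAddCommGroup F] [InnerProductSpace ℂ F]
    [CompleteSpace F] (E : HilbertBasis (Fin n → ℕ) ℂ F)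
    (A Ad : Fin n → F →L[ℂ] F)
    (hAdj : ∀ i, Ad i = ContinuousLinearMap.adjoint (A i))
    (hA : ∀ i k, A i (E k) = if WMTop i k then E (wmDec k i) else 0)
    (hAc : ∀ i k, Ad i (E k) = if WMCanCreate i k then E (wmInc k i) else 0)
    (Aw : (Fin n → ℕ) → F →L[ℂ] F)
    (hAw : ∀ μ, Aw μ = (List.ofFn fun j : Fin n => (A j) ^ (μ j)).prod)
    (P : (Fin n → ℕ) → F →L[ℂ] F)
    (hP : ∀ μ, P μ = star (Aw μ) * Aw μ)
    :
    ∀ μ ν : Fin n → ℕ, μ ≠ ν → P μ * P ν ≠ 0 →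
      (P μ * P ν = P μ ↔
        ∃ m : Fin n, (∀ j, m < j → ν j = μ j) ∧ ν m < μ m ∧ ∀ j, j < m → ν j = 0) := by
  have hPap : ∀ μ k, P μ (E k) = if WMDom μ k then E k else 0 := by
    intro μ k
    rw [hP, hAw]
    exact wm_P_apply E A Ad hAdj hA hAc μ k
  have hPPap : ∀ μ ν k, (P μ * P ν) (E k) = if WMDom μ k ∧ WMDom ν k then E k else 0 := by
    intro μ ν k
    rw [ContinuousLinearMap.mul_apply, hPap ν k]
    by_cases hν : WMDom ν k
    · rw [if_pos hν, hPap μ k]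
      by_cases hμ : WMDom μ k
      · rw [if_pos hμ, if_pos ⟨hμ, hν⟩]
      · rw [if_neg hμ, if_neg (fun h => hμ h.1)]
    · rw [if_neg hν, map_zero, if_neg (fun h => hν h.2)]
  have hEne : ∀ k, (E k : F) ≠ 0 := by
    intro k h
    have h1 := E.orthonormal.1 k
    rw [h, norm_zero] at h1
    exact one_ne_zero h1.symm
  have hext : ∀ f g : F →L[ℂ] F, (∀ k, f (E k) = g (E k)) → f = g := by
    intro f g h
    ext x
    have hf := (E.hasSum_repr x).mapL f
    have hg := (E.hasSum_repr x).mapL g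
    simp only [map_smul] at hf hg
    simp only [h] at hf
    exact hf.unique hg
  intro μ ν hne _
  constructor
  · intro heq
    have H : ∀ k, WMDom μ k → WMDom ν k := by
      intro k hk
      have h := ContinuousLinearMap.ext_iff.mp heq (E k)
      rw [hPPap, hPap, if_pos hk] at h
      by_contra hν
      rw [if_neg (fun hc => hν hc.2)] at h
      exact hEne k h.symm
    have hDμμ : WMDom μ μ := ⟨fun j => le_rfl, fun _ _ _ _ => rfl⟩
    obtain ⟨hle, hdag⟩ := H μ hDμμ
    have hex : ∃ j, ν j < μ j := by
      by_contra hcon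
      push_neg at hcon
      exact hne (funext fun j => le_antisymm (hcon j) (hle j))
    set S := Finset.univ.filter (fun j : Fin n => ν j < μ j) with hSdef
    have hS : S.Nonempty := by
      obtain ⟨j, hj⟩ := hex
      exact ⟨j, by simp [hSdef, hj]⟩
    have htlt : ν (S.max' hS) < μ (S.max' hS) := by
      have := S.max'_mem hS
      simpa [hSdef] using this
    refine ⟨S.max' hS, ?_, htlt, ?_⟩
    · intro j hj
      have hnot : j ∉ S := fun hmem => absurd (S.le_max' j hmem) (not_le.2 hj)
      have hnlt : ¬ ν j < μ j := fun hlt => hnot (by simp [hSdef, hlt])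
      exact le_antisymm (hle j) (not_lt.1 hnlt)
    · intro j hjt
      by_contra h0
      have hpos : 0 < ν j := Nat.pos_of_ne_zero h0
      have := hdag j (S.max' hS) hjt hpos
      omega
  · rintro ⟨m, h1, h2, h3⟩
    have hmono : ∀ k, WMDom μ k → WMDom ν k := by
      rintro k ⟨hk1, hk2⟩
      constructor
      · intro j
        rcases lt_trichotomy j m with h | h | h
        · rw [h3 j h]; exact Nat.zero_le _
        · rw [h]; exact le_of_lt (lt_of_lt_of_le h2 (hk1 m))
        · rw [h1 j h]; exact hk1 j
      · intro j i hji hpos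
        have hmj : m ≤ j := by
          by_contra h'
          push_neg at h'
          rw [h3 j h'] at hpos
          exact absurd hpos (lt_irrefl 0)
        have hi : m < i := lt_of_le_of_lt hmj hji
        have hposμ : 0 < μ j := by
          rcases eq_or_lt_of_le hmj with he | hl
          · rw [← he]; omega
          · rw [← h1 j hl]; exact hpos
        rw [hk2 j i hji hposμ, ← h1 i hi]
    apply hext
    intro k
    rw [hPPap, hPap]
    by_cases hμ : WMDom μ k
    · rw [if_pos ⟨hμ, hmono k hμ⟩, if_pos hμ]
    · rw [if_neg (fun h => hμ h.1), if_neg hμ]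
end

section
/- In the weakly monotone Fock representation with 2-dimensional one-particle space, the operator (A†_2)^k (A†_1)^l (A_1)^l (A_2)^k is the orthogonal projection onto the closed span of Ω together with all basis vectors e_2^{k'} ⊗ e_1^{l'} with k' ≥ k and (l' ≥ l or k' > k accordingly), i.e., onto the range of (A†_2)^k (A†_1)^l. -/
open scoped Classical

set_option linter.unusedSectionVars false

section WMAux
variable {F : Type*} [NormedAddCommGroup F] [InnerProductSpace ℂ F]
    [CompleteSpace F] (E : HilbertBasis (Fin 2 → ℕ) ℂ F)

lemma wm_ext_basis {f g : F →L[ℂ] F} (h : ∀ m, f (E m) = g (E m)) : f = g := by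
  apply ContinuousLinearMap.ext_on (s := Set.range ⇑E)
  · rw [Submodule.dense_iff_topologicalClosure_eq_top]; exact E.dense_span
  · rintro x ⟨m, rfl⟩; exact h m

lemma wm_pow_A1 (A : F →L[ℂ] F)
    (hA : ∀ m, A (E m) = if 0 < m 1 then E (Function.update m 1 (m 1 - 1)) else 0) :
    ∀ (n : ℕ) (m : Fin 2 → ℕ), (A ^ n) (E m) =
      if n ≤ m 1 then E (Function.update m 1 (m 1 - n)) else 0 := by
  intro n
  induction n with
  | zero => intro m; simp
  | succ n ih =>
    intro m
    rw [pow_succ, ContinuousLinearMap.mul_apply, hA]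
    by_cases h : 0 < m 1
    · rw [if_pos h, ih]
      simp only [Function.update_self, Function.update_idem]
      have h3 : m 1 - 1 - n = m 1 - (n + 1) := by omega
      rw [h3]
      by_cases h2 : n + 1 ≤ m 1
      · rw [if_pos (by omega), if_pos h2]
      · rw [if_neg (by omega), if_neg h2]
    · rw [if_neg h, map_zero, if_neg (by omega)]

lemma wm_pow_A0 (A : F →L[ℂ] F)
    (hA : ∀ m, A (E m) = if 0 < m 0 ∧ m 1 = 0 then E (Function.update m 0 (m 0 - 1)) else 0) :
    ∀ (n : ℕ) (m : Fin 2 → ℕ), (A ^ n) (E m) =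
      if n ≤ m 0 ∧ (n = 0 ∨ m 1 = 0) then E (Function.update m 0 (m 0 - n)) else 0 := by
  intro n
  induction n with
  | zero => intro m; simp
  | succ n ih =>
    intro m
    rw [pow_succ, ContinuousLinearMap.mul_apply, hA]
    by_cases h : 0 < m 0 ∧ m 1 = 0
    · obtain ⟨h0, h1⟩ := h
      rw [if_pos ⟨h0, h1⟩, ih]
      simp only [Function.update_self, Function.update_idem,
        Function.update_of_ne (show (1 : Fin 2) ≠ 0 by decide)]
      have h3 : m 0 - 1 - n = m 0 - (n + 1) := by omega
      rw [h3]
      by_cases h2 : n + 1 ≤ m 0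
      · rw [if_pos (by omega), if_pos (by omega)]
      · rw [if_neg (by omega), if_neg (by omega)]
    · rw [if_neg h, map_zero, if_neg (by omega)]

lemma wm_pow_Ad1 (A : F →L[ℂ] F)
    (hA : ∀ m, A (E m) = E (Function.update m 1 (m 1 + 1))) :
    ∀ (n : ℕ) (m : Fin 2 → ℕ), (A ^ n) (E m) = E (Function.update m 1 (m 1 + n)) := by
  intro n
  induction n with
  | zero => intro m; simp
  | succ n ih =>
    intro m
    rw [pow_succ, ContinuousLinearMap.mul_apply, hA, ih]
    simp only [Function.update_self, Function.update_idem]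
    have h3 : m 1 + 1 + n = m 1 + (n + 1) := by omega
    rw [h3]

lemma wm_pow_Ad0 (A : F →L[ℂ] F)
    (hA : ∀ m, A (E m) = if m 1 = 0 then E (Function.update m 0 (m 0 + 1)) else 0) :
    ∀ (n : ℕ) (m : Fin 2 → ℕ), (A ^ n) (E m) =
      if n = 0 ∨ m 1 = 0 then E (Function.update m 0 (m 0 + n)) else 0 := by
  intro n
  induction n with
  | zero => intro m; simp
  | succ n ih =>
    intro m
    rw [pow_succ, ContinuousLinearMap.mul_apply, hA]
    by_cases h : m 1 = 0
    · rw [if_pos h, ih]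
      simp only [Function.update_self, Function.update_idem,
        Function.update_of_ne (show (1 : Fin 2) ≠ 0 by decide)]
      have h3 : m 0 + 1 + n = m 0 + (n + 1) := by omega
      rw [h3, if_pos (Or.inr h), if_pos (Or.inr h)]
    · rw [if_neg h, map_zero, if_neg (by omega)]

end WMAux
open scoped Classical


theorem projection_onto_creation_range
    {F : Type*} [NormedAddCommGroup F] [InnerProductSpace ℂ F]
    [CompleteSpace F] (E : HilbertBasis (Fin 2 → ℕ) ℂ F)
    (A Ad : Fin 2 → F →L[ℂ] F)
    (hAdj : ∀ i, Ad i = ContinuousLinearMap.adjoint (A i))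
    (hA : ∀ i k, A i (E k) = if WMTop i k then E (wmDec k i) else 0)
    (hAc : ∀ i k, Ad i (E k) = if WMCanCreate i k then E (wmInc k i) else 0)
    (k l : ℕ)
    (T : F →L[ℂ] F)
    (hT : T = (Ad 1) ^ k * (Ad 0) ^ l * (A 0) ^ l * (A 1) ^ k) :
    IsSelfAdjoint T ∧ IsIdempotentElem T ∧
      Set.range ⇑T = Set.range ⇑((Ad 1) ^ k * (Ad 0) ^ l) := by
  have hWT1 : ∀ m : Fin 2 → ℕ, WMTop 1 m ↔ 0 < m 1 := by
    intro m
    constructor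
    · exact fun h => h.1
    · intro h
      refine ⟨h, fun j hj => ?_⟩
      fin_cases j <;> exact absurd hj (by decide)
  have hWT0 : ∀ m : Fin 2 → ℕ, WMTop 0 m ↔ 0 < m 0 ∧ m 1 = 0 := by
    intro m
    constructor
    · exact fun h => ⟨h.1, h.2 1 (by decide)⟩
    · intro h
      refine ⟨h.1, fun j hj => ?_⟩
      fin_cases j
      · exact absurd hj (by decide)
      · exact h.2
  have hWC0 : ∀ m : Fin 2 → ℕ, WMCanCreate 0 m ↔ m 1 = 0 := by
    intro m
    constructor
    · exact fun h => h 1 (by decide)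
    · intro h j hj
      fin_cases j
      · exact absurd hj (by decide)
      · exact h
  have hWC1 : ∀ m : Fin 2 → ℕ, WMCanCreate 1 m := by
    intro m j hj
    fin_cases j <;> exact absurd hj (by decide)
  have hA1 : ∀ m : Fin 2 → ℕ, (A 1) (E m) =
      if 0 < m 1 then E (Function.update m 1 (m 1 - 1)) else 0 := by
    intro m; rw [hA 1 m, if_congr (hWT1 m) rfl rfl]; rfl
  have hA0 : ∀ m : Fin 2 → ℕ, (A 0) (E m) =
      if 0 < m 0 ∧ m 1 = 0 then E (Function.update m 0 (m 0 - 1)) else 0 := by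
    intro m; rw [hA 0 m, if_congr (hWT0 m) rfl rfl]; rfl
  have hAd1 : ∀ m : Fin 2 → ℕ, (Ad 1) (E m) = E (Function.update m 1 (m 1 + 1)) := by
    intro m; rw [hAc 1 m, if_pos (hWC1 m)]; rfl
  have hAd0 : ∀ m : Fin 2 → ℕ, (Ad 0) (E m) =
      if m 1 = 0 then E (Function.update m 0 (m 0 + 1)) else 0 := by
    intro m; rw [hAc 0 m, if_congr (hWC0 m) rfl rfl]; rfl
  set C : F →L[ℂ] F := (Ad 1) ^ k * (Ad 0) ^ l with hCdef
  set D : F →L[ℂ] F := (A 0) ^ l * (A 1) ^ k with hDdef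
  have hTCD : T = C * D := by rw [hT, mul_assoc]
  have hC : ∀ m : Fin 2 → ℕ, C (E m) =
      if l = 0 ∨ m 1 = 0 then
        E (Function.update (Function.update m 0 (m 0 + l)) 1 (m 1 + k)) else 0 := by
    intro m
    rw [hCdef, ContinuousLinearMap.mul_apply, wm_pow_Ad0 E _ hAd0 l m]
    by_cases h : l = 0 ∨ m 1 = 0
    · rw [if_pos h, wm_pow_Ad1 E _ hAd1 k _]
      simp only [Function.update_of_ne (show (1 : Fin 2) ≠ 0 by decide)]
      rw [if_pos h]
    · rw [if_neg h, map_zero, if_neg h]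
  have hD : ∀ m : Fin 2 → ℕ, D (E m) =
      if k ≤ m 1 ∧ l ≤ m 0 ∧ (l = 0 ∨ m 1 = k) then
        E (Function.update (Function.update m 1 (m 1 - k)) 0 (m 0 - l)) else 0 := by
    intro m
    rw [hDdef, ContinuousLinearMap.mul_apply, wm_pow_A1 E _ hA1 k m]
    by_cases h1 : k ≤ m 1
    · rw [if_pos h1, wm_pow_A0 E _ hA0 l _]
      simp only [Function.update_self,
        Function.update_of_ne (show (0 : Fin 2) ≠ 1 by decide)]
      by_cases h2 : l ≤ m 0 ∧ (l = 0 ∨ m 1 = k)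
      · rw [if_pos (by omega), if_pos (by omega)]
      · rw [if_neg (by omega), if_neg (by omega)]
    · rw [if_neg h1, map_zero, if_neg (by omega)]
  have hKey : C * D * C = C := by
    apply wm_ext_basis E
    intro m
    rw [ContinuousLinearMap.mul_apply, ContinuousLinearMap.mul_apply, hC m]
    by_cases h : l = 0 ∨ m 1 = 0
    · rw [if_pos h, hD]
      have e1 : (Function.update (Function.update m 0 (m 0 + l)) 1 (m 1 + k)) 1
          = m 1 + k := Function.update_self _ _ _
      have e0 : (Function.update (Function.update m 0 (m 0 + l)) 1 (m 1 + k)) 0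
          = m 0 + l := by
        rw [Function.update_of_ne (show (0 : Fin 2) ≠ 1 by decide), Function.update_self]
      rw [if_pos (by rw [e1, e0]; omega)]
      have e1' : (Function.update
          (Function.update (Function.update (Function.update m 0 (m 0 + l)) 1 (m 1 + k)) 1
            ((Function.update (Function.update m 0 (m 0 + l)) 1 (m 1 + k)) 1 - k))
          0 ((Function.update (Function.update m 0 (m 0 + l)) 1 (m 1 + k)) 0 - l)) 1
          = m 1 := by
        rw [Function.update_of_ne (show (1 : Fin 2) ≠ 0 by decide),
          Function.update_self, e1]
        omega
      have e0' : (Function.update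
          (Function.update (Function.update (Function.update m 0 (m 0 + l)) 1 (m 1 + k)) 1
            ((Function.update (Function.update m 0 (m 0 + l)) 1 (m 1 + k)) 1 - k))
          0 ((Function.update (Function.update m 0 (m 0 + l)) 1 (m 1 + k)) 0 - l)) 0
          = m 0 := by
        rw [Function.update_self, e0]
        omega
      rw [hC, if_pos (by rw [e1']; exact h), e1', e0']
      congr 1
      funext j
      fin_cases j <;> simp [Function.update, Fin.ext_iff]
    · rw [if_neg h, map_zero, map_zero]
  have hstar : ∀ i, star (Ad i) = A i := by
    intro i
    rw [ContinuousLinearMap.star_eq_adjoint, hAdj, ContinuousLinearMap.adjoint_adjoint]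
  have hstarC : star C = D := by
    rw [hCdef, hDdef, star_mul, star_pow, star_pow, hstar, hstar]
  have hstarD : star D = C := by rw [← hstarC, star_star]
  refine ⟨?_, ?_, ?_⟩
  · show star T = T
    rw [hTCD, star_mul, hstarC, hstarD]
  · show T * T = T
    rw [hTCD, ← mul_assoc, hKey]
  · ext x
    constructor
    · rintro ⟨y, rfl⟩
      exact ⟨D y, (ContinuousLinearMap.mul_apply C D y).symm.trans (congrFun (congrArg _ hTCD.symm) y)⟩
    · rintro ⟨y, rfl⟩
      refine ⟨C y, ?_⟩
      calc T (C y) = (C * D * C) y := by rw [hTCD]; rfl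
        _ = C y := DFunLike.congr_fun hKey y
end
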